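/- arXiv:2106.02970 — 3 statements merged into one kernel-verified Lean document; each statement's English description precedes it below -/
import Mathlib

section
/- Let X_1,…,X_n be independent random variables with X_i exponentially distributed with rate h_i > 0, and let 0 ≤ d_1 ≤ d_2 ≤ ⋯ ≤ d_n be real shifts, with H_k = h_1 + ⋯ + h_k. For each fixed i, the expectation E[ (X_i + d_i) · 1{ X_i + d_i ≤ X_j + d_j for all j } ] equals h_i · { Σ_{k=i}^{n-1} (e^{Σ_{j=1}^{k} h_j d_j} / H_k²) · [ (1 + H_k d_k) e^{-H_k d_k} − (1 + H_k d_{k+1}) e^{-H_k d_{k+1}} ] + (e^{Σ_{j=1}^{n} h_j d_j} / H_n²) · (1 + H_n d_n) e^{-H_n d_n} }. (This is the quantity τ̄_i computed in the proof of Theorem 1, the contribution of miner i to the expected inter-block time.) -/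
open MeasureTheory ProbabilityTheory Real

/-- `Hsum h k = h 0 + h 1 + ⋯ + h k` (partial sums of the mining rates, 0-indexed). -/
noncomputable def Hsum (h : ℕ → ℝ) (k : ℕ) : ℝ := ∑ j ∈ Finset.range (k + 1), h j

/-!
Conditioning on `X_i`, miner `i` wins iff `X_j + d_j ≥ X_i + d_i` for every `j ≠ i`, which by
independence has probability `∏_{j ≠ i} exp(-h_j (X_i + d_i - d_j)⁺)`. Combined with the
density of `X_i + d_i`, the expectation becomes `h_i ∫_{d_i}^∞ t G(t) dt`, where
`G(t) = ∏_j exp(-h_j (t - d_j)⁺)` is the survival function of the block time. On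
`[d_k, d_{k+1}]` only the first `k + 1` clocks are running, so there
`G(t) = exp(∑_{j ≤ k} h_j d_j) e^{-H_k t}`, and the formula follows by integrating
`t e^{-H_k t}` piece by piece.
-/

open Set Filter Topology
open scoped ENNReal

section LinearTimesExponential

variable {H : ℝ}

theorem hasDerivAt_mul_exp_neg_mul_antideriv (hH : H ≠ 0) (t : ℝ) :
    HasDerivAt (fun t => -((1 + H * t) * exp (-(H * t))) / H ^ 2) (t * exp (-(H * t))) t := by
  have hlin : HasDerivAt (fun t => 1 + H * t) H t := by
    simpa using ((hasDerivAt_id t).const_mul H).const_add 1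
  have hexp : HasDerivAt (fun t => exp (-(H * t))) (exp (-(H * t)) * -H) t := by
    simpa using (((hasDerivAt_id t).const_mul H).neg).exp
  refine ((hlin.fun_mul hexp).fun_neg.div_const (H ^ 2)).congr_deriv ?_
  field_simp
  ring

theorem tendsto_one_add_mul_mul_exp_neg_mul_atTop (hH : 0 < H) :
    Tendsto (fun t => (1 + H * t) * exp (-(H * t))) atTop (𝓝 0) := by
  have h := tendsto_exp_neg_atTop_nhds_zero.add (tendsto_pow_mul_exp_neg_atTop_nhds_zero 1)
  rw [add_zero] at h
  have h' : Tendsto (fun u => (1 + u) * exp (-u)) atTop (𝓝 0) := h.congr fun u => by ring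
  exact h'.comp (tendsto_id.const_mul_atTop hH)

theorem tendsto_mul_exp_neg_mul_antideriv_atTop (hH : 0 < H) :
    Tendsto (fun t => -((1 + H * t) * exp (-(H * t))) / H ^ 2) atTop (𝓝 0) := by
  simpa using (tendsto_one_add_mul_mul_exp_neg_mul_atTop hH).neg.div_const (H ^ 2)

theorem integrableOn_Ioi_mul_exp_neg_mul (hH : 0 < H) {a : ℝ} (ha : 0 ≤ a) :
    IntegrableOn (fun t => t * exp (-(H * t))) (Ioi a) :=
  integrableOn_Ioi_deriv_of_nonneg' (fun t _ => hasDerivAt_mul_exp_neg_mul_antideriv hH.ne' t)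
    (fun _ ht => mul_nonneg (ha.trans ht.out.le) (exp_pos _).le)
    (tendsto_mul_exp_neg_mul_antideriv_atTop hH)

theorem integral_Ioi_mul_exp_neg_mul (hH : 0 < H) {a : ℝ} (ha : 0 ≤ a) :
    ∫ t in Ioi a, t * exp (-(H * t)) = (1 + H * a) * exp (-(H * a)) / H ^ 2 := by
  rw [integral_Ioi_of_hasDerivAt_of_nonneg'
    (fun t _ => hasDerivAt_mul_exp_neg_mul_antideriv hH.ne' t)
    (fun _ ht => mul_nonneg (ha.trans ht.out.le) (exp_pos _).le)
    (tendsto_mul_exp_neg_mul_antideriv_atTop hH)]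
  ring

theorem integral_Ioc_mul_exp_neg_mul (hH : H ≠ 0) {a b : ℝ} (hab : a ≤ b) :
    ∫ t in Ioc a b, t * exp (-(H * t)) =
      ((1 + H * a) * exp (-(H * a)) - (1 + H * b) * exp (-(H * b))) / H ^ 2 := by
  rw [← intervalIntegral.integral_of_le hab, intervalIntegral.integral_eq_sub_of_hasDerivAt
    (fun t _ => hasDerivAt_mul_exp_neg_mul_antideriv hH t)
    ((by fun_prop : Continuous _).intervalIntegrable _ _)]
  ring

end LinearTimesExponential

/-- `ℙ(X_j + d_j > t for all j < n)` when the `X_j` are independent with `X_j ∼ Exp(h_j)`. -/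
noncomputable def shiftedSurvival (h d : ℕ → ℝ) (n : ℕ) (t : ℝ) : ℝ :=
  ∏ j ∈ Finset.range n, exp (-(h j * max (t - d j) 0))

section ShiftedSurvival

variable {h d : ℕ → ℝ} {n : ℕ}

theorem Hsum_pos (hh : ∀ j < n, 0 < h j) {k : ℕ} (hk : k < n) : 0 < Hsum h k :=
  Finset.sum_pos (fun j hj => hh j (by simp at hj; omega)) Finset.nonempty_range_add_one

theorem continuous_shiftedSurvival (h d : ℕ → ℝ) (n : ℕ) :
    Continuous (shiftedSurvival h d n) := by
  unfold shiftedSurvival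
  fun_prop

theorem shiftedSurvival_pos (t : ℝ) : 0 < shiftedSurvival h d n t :=
  Finset.prod_pos fun _ _ => exp_pos _

theorem shiftedSurvival_eq {k : ℕ} (hk : k < n) {t : ℝ} (hle : ∀ j ≤ k, d j ≤ t)
    (hge : ∀ j, k < j → j < n → t ≤ d j) :
    shiftedSurvival h d n t =
      exp (∑ j ∈ Finset.range (k + 1), h j * d j) * exp (-(Hsum h k * t)) := by
  have hrunning : ∀ j ∈ Finset.range (k + 1),
      exp (-(h j * max (t - d j) 0)) = exp (h j * d j) * exp (-(h j * t)) := by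
    intro j hj
    rw [max_eq_left (sub_nonneg.2 (hle j (Finset.mem_range_succ_iff.1 hj))), ← exp_add]
    ring_nf
  have hidle : ∀ j ∈ Finset.Ico (k + 1) n, exp (-(h j * max (t - d j) 0)) = 1 := by
    intro j hj
    obtain ⟨hkj, hjn⟩ := Finset.mem_Ico.1 hj
    rw [max_eq_right (sub_nonpos.2 (hge j hkj hjn)), mul_zero, neg_zero, exp_zero]
  rw [shiftedSurvival, ← Finset.prod_range_mul_prod_Ico _ hk, Finset.prod_congr rfl hrunning,
    Finset.prod_congr rfl hidle, Finset.prod_const_one, mul_one, Finset.prod_mul_distrib,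
    ← exp_sum, ← exp_sum, Hsum, Finset.sum_mul, ← Finset.sum_neg_distrib]

theorem shiftedSurvival_le (hn : 0 < n) (hh : ∀ j < n, 0 ≤ h j) (t : ℝ) :
    shiftedSurvival h d n t ≤ exp (-(h 0 * (t - d 0))) := by
  have hfactor : ∀ j ∈ Finset.range n, exp (-(h j * max (t - d j) 0)) ≤ 1 := fun j hj =>
    exp_le_one_iff.2 (neg_nonpos.2 (mul_nonneg (hh j (Finset.mem_range.1 hj)) (le_max_right _ _)))
  rw [shiftedSurvival, ← Finset.mul_prod_erase _ _ (Finset.mem_range.2 hn)]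
  refine (mul_le_of_le_one_right (exp_pos _).le (Finset.prod_le_one (fun _ _ => (exp_pos _).le)
    fun j hj => hfactor j (Finset.mem_of_mem_erase hj))).trans ?_
  rw [exp_le_exp, neg_le_neg_iff]
  exact mul_le_mul_of_nonneg_left (le_max_left _ _) (hh 0 hn)

theorem integrableOn_Ioi_mul_shiftedSurvival (hn : 0 < n) (hh : ∀ j < n, 0 < h j) {a : ℝ}
    (ha : 0 ≤ a) : IntegrableOn (fun t => t * shiftedSurvival h d n t) (Ioi a) := by
  refine ((integrableOn_Ioi_mul_exp_neg_mul (hh 0 hn) ha).const_mul (exp (h 0 * d 0))).mono'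
    (continuous_id.mul (continuous_shiftedSurvival h d n)).aestronglyMeasurable
    (ae_restrict_of_forall_mem measurableSet_Ioi fun t ht => ?_)
  have ht : 0 ≤ t := ha.trans (le_of_lt ht)
  calc ‖t * shiftedSurvival h d n t‖ = t * shiftedSurvival h d n t := by
        rw [Real.norm_of_nonneg (mul_nonneg ht (shiftedSurvival_pos t).le)]
    _ ≤ t * exp (-(h 0 * (t - d 0))) :=
        mul_le_mul_of_nonneg_left (shiftedSurvival_le hn (fun j hj => (hh j hj).le) t) ht
    _ = exp (h 0 * d 0) * (t * exp (-(h 0 * t))) := by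
        rw [mul_left_comm, ← exp_add]
        ring_nf

end ShiftedSurvival

section ClosedForm

variable {h d : ℕ → ℝ} {n : ℕ}

theorem integral_Ioc_mul_shiftedSurvival (hh : ∀ j < n, 0 < h j) (hd : MonotoneOn d (Iio n))
    {k : ℕ} (hk : k + 1 < n) :
    ∫ t in Ioc (d k) (d (k + 1)), t * shiftedSurvival h d n t =
      exp (∑ j ∈ Finset.range (k + 1), h j * d j) / Hsum h k ^ 2 *
        ((1 + Hsum h k * d k) * exp (-(Hsum h k * d k)) -
          (1 + Hsum h k * d (k + 1)) * exp (-(Hsum h k * d (k + 1)))) := by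
  have hpiece : EqOn (fun t => t * shiftedSurvival h d n t)
      (fun t => exp (∑ j ∈ Finset.range (k + 1), h j * d j) * (t * exp (-(Hsum h k * t))))
      (Ioc (d k) (d (k + 1))) := fun t ht => by
    dsimp only
    rw [shiftedSurvival_eq (by omega)
      (fun j hj => (hd (show j < n by omega) (show k < n by omega) hj).trans ht.1.le)
      (fun j hkj hjn => ht.2.trans (hd (show k + 1 < n from hk) (show j < n from hjn) hkj))]
    ring
  rw [setIntegral_congr_fun measurableSet_Ioc hpiece, integral_const_mul,
    integral_Ioc_mul_exp_neg_mul (Hsum_pos hh (by omega)).ne' (hd (show k < n by omega) hk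
      k.le_succ)]
  ring

theorem integral_Ioi_mul_shiftedSurvival_last (hn : 0 < n) (hh : ∀ j < n, 0 < h j)
    (hd : MonotoneOn d (Iio n)) (hdn : 0 ≤ d (n - 1)) :
    ∫ t in Ioi (d (n - 1)), t * shiftedSurvival h d n t =
      exp (∑ j ∈ Finset.range n, h j * d j) / Hsum h (n - 1) ^ 2 *
        ((1 + Hsum h (n - 1) * d (n - 1)) * exp (-(Hsum h (n - 1) * d (n - 1)))) := by
  have hpiece : EqOn (fun t => t * shiftedSurvival h d n t)
      (fun t => exp (∑ j ∈ Finset.range n, h j * d j) * (t * exp (-(Hsum h (n - 1) * t))))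
      (Ioi (d (n - 1))) := fun t ht => by
    dsimp only
    rw [shiftedSurvival_eq (by omega)
      (fun j hj => (hd (show j < n by omega) (show n - 1 < n by omega) hj).trans ht.out.le)
      (fun j hkj hjn => by omega), Nat.sub_add_cancel hn]
    ring
  rw [setIntegral_congr_fun measurableSet_Ioi hpiece, integral_const_mul,
    integral_Ioi_mul_exp_neg_mul (Hsum_pos hh (by omega)) hdn]
  ring

theorem integral_Ioi_mul_shiftedSurvival (hh : ∀ j < n, 0 < h j) (hd : MonotoneOn d (Iio n))
    (hd0 : 0 ≤ d 0) {i : ℕ} (hi : i < n) :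
    ∫ t in Ioi (d i), t * shiftedSurvival h d n t =
      (∑ k ∈ Finset.Ico i (n - 1),
          exp (∑ j ∈ Finset.range (k + 1), h j * d j) / Hsum h k ^ 2 *
            ((1 + Hsum h k * d k) * exp (-(Hsum h k * d k)) -
              (1 + Hsum h k * d (k + 1)) * exp (-(Hsum h k * d (k + 1))))) +
        exp (∑ j ∈ Finset.range n, h j * d j) / Hsum h (n - 1) ^ 2 *
          ((1 + Hsum h (n - 1) * d (n - 1)) * exp (-(Hsum h (n - 1) * d (n - 1)))) := by
  have hn : 0 < n := by omega
  have hdnonneg : ∀ j < n, 0 ≤ d j := fun j hj =>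
    hd0.trans (hd (show 0 < n from hn) hj j.zero_le)
  induction hm : n - 1 - i generalizing i with
  | zero =>
    obtain rfl : i = n - 1 := by omega
    rw [Finset.Ico_self, Finset.sum_empty, zero_add,
      integral_Ioi_mul_shiftedSurvival_last hn hh hd (hdnonneg _ hi)]
  | succ _ ih =>
    have hi1 : i + 1 < n := by omega
    rw [← Ioc_union_Ioi_eq_Ioi (hd (show i < n from hi) hi1 i.le_succ),
      setIntegral_union (Ioc_disjoint_Ioi le_rfl) measurableSet_Ioi
        ((integrableOn_Ioi_mul_shiftedSurvival hn hh (hdnonneg i hi)).mono_set Ioc_subset_Ioi_self)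
        (integrableOn_Ioi_mul_shiftedSurvival hn hh (hdnonneg _ hi1)),
      integral_Ioc_mul_shiftedSurvival hh hd hi1, ih hi1 (by omega),
      Finset.sum_eq_sum_Ico_succ_bot (by omega : i < n - 1), add_assoc]

end ClosedForm

section ShiftedExponential

variable {r : ℝ}

theorem expMeasure_Ici (hr : 0 < r) (x : ℝ) :
    expMeasure r (Ici x) = ENNReal.ofReal (exp (-(r * max x 0))) := by
  have := isProbabilityMeasure_expMeasure hr
  have hatom : expMeasure r {x} = 0 :=
    withDensity_absolutelyContinuous _ _ (Real.volume_singleton (a := x))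
  rw [← compl_Iio, prob_compl_eq_one_sub measurableSet_Iio, measure_congr (Iio_ae_eq_Iic' hatom),
    ← ofReal_cdf, cdf_expMeasure_eq hr]
  split_ifs with hx
  · rw [max_eq_left hx, ← ENNReal.ofReal_one, ← ENNReal.ofReal_sub _
    (sub_nonneg.2 (exp_le_one_iff.2 (neg_nonpos.2 (mul_nonneg hr.le hx))))]
    ring_nf
  · rw [max_eq_right (not_le.1 hx).le]
    simp

theorem isProbabilityMeasure_map_add_expMeasure (hr : 0 < r) (c : ℝ) :
    IsProbabilityMeasure ((expMeasure r).map (· + c)) :=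
  have := isProbabilityMeasure_expMeasure hr
  Measure.isProbabilityMeasure_map (measurable_add_const c).aemeasurable

theorem map_add_expMeasure_Ici (hr : 0 < r) (c x : ℝ) :
    (expMeasure r).map (· + c) (Ici x) = ENNReal.ofReal (exp (-(r * max (x - c) 0))) := by
  rw [Measure.map_apply (measurable_add_const c) measurableSet_Ici, preimage_add_const_Ici,
    expMeasure_Ici hr]

theorem lintegral_map_add_expMeasure (c : ℝ) {g : ℝ → ℝ≥0∞} (hg : Measurable g) :
    ∫⁻ t, g t ∂(expMeasure r).map (· + c) =
      ∫⁻ t in Ici c, ENNReal.ofReal (r * exp (-(r * (t - c)))) * g t := by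
  rw [lintegral_map hg (measurable_add_const c)]
  show ∫⁻ x, g (x + c) ∂volume.withDensity (exponentialPDF r) = _
  have hpdf : Measurable (exponentialPDF r) := (measurable_exponentialPDFReal r).ennreal_ofReal
  have hgc : Measurable fun x => g (x + c) := hg.comp (measurable_add_const c)
  rw [lintegral_withDensity_eq_lintegral_mul _ hpdf hgc,
    ← lintegral_sub_right_eq_self _ c, ← lintegral_indicator measurableSet_Ici]
  congr 1 with t
  rw [Pi.mul_apply, sub_add_cancel, exponentialPDF_eq, indicator_apply]
  simp only [mem_Ici, sub_nonneg]
  split_ifs <;> simp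

end ShiftedExponential

theorem setLIntegral_pi_eval_forall_le {m : ℕ} (ν : Fin (m + 1) → Measure ℝ)
    [∀ j, SigmaFinite (ν j)] (i : Fin (m + 1)) {f : ℝ → ℝ≥0∞} (hf : Measurable f) :
    ∫⁻ y in {y : Fin (m + 1) → ℝ | ∀ j, y i ≤ y j}, f (y i) ∂Measure.pi ν =
      ∫⁻ t, f t * ∏ j : Fin m, ν (i.succAbove j) (Ici t) ∂ν i := by
  set e := MeasurableEquiv.piFinSuccAbove (fun _ => ℝ) i
  set S : Set (ℝ × (Fin m → ℝ)) := {p | ∀ j, p.1 ≤ p.2 j}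
  have hS : MeasurableSet S := by
    simp only [S, ofPred_forall]
    exact MeasurableSet.iInter fun j =>
      measurableSet_le measurable_fst ((measurable_pi_apply j).comp measurable_snd)
  have hpre : {y : Fin (m + 1) → ℝ | ∀ j, y i ≤ y j} = e ⁻¹' S := by
    ext y
    simp [S, e, i.forall_iff_succAbove, Fin.removeNth]
  have hsection : ∀ t, (fun y => S.indicator (fun p => f p.1) (t, y)) =
      (univ.pi fun _ => Ici t).indicator fun _ => f t := fun t => by
    classical
    ext y
    simp only [S, indicator_apply, mem_ofPred_eq, mem_univ_pi, mem_Ici]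
  rw [hpre]
  refine ((measurePreserving_piFinSuccAbove ν i).setLIntegral_comp_preimage_emb
      e.measurableEmbedding (fun p => f p.1) S).trans ?_
  rw [← lintegral_indicator hS, lintegral_prod (S.indicator fun p => f p.1)
    ((hf.comp measurable_fst).indicator hS).aemeasurable]
  refine lintegral_congr fun t => ?_
  rw [hsection, lintegral_indicator_const (MeasurableSet.univ_pi fun _ => measurableSet_Ici),
    Measure.pi_pi]

theorem ProbabilityTheory.iIndepFun.map_fun_add_const_eq_pi {ι Ω : Type*} [Fintype ι]
    [MeasurableSpace Ω] {μ : Measure Ω} {X : ι → Ω → ℝ} (hX : ∀ i, Measurable (X i))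
    (hind : iIndepFun X μ) (c : ι → ℝ) :
    μ.map (fun ω i => X i ω + c i) = Measure.pi fun i => (μ.map (X i)).map (· + c i) := by
  rw [(hind.comp (fun i x => x + c i) fun i => measurable_add_const (c i)).map_fun_eq_pi_map
    fun i => ((hX i).add_const _).aemeasurable]
  congr with i : 1
  rw [Measure.map_map (measurable_add_const _) (hX i)]
  rfl

section Winner

variable {m : ℕ} {h d : ℕ → ℝ}

theorem setLIntegral_pi_eval_forall_le_expMeasure (hh : ∀ j < m + 1, 0 < h j) (i : Fin (m + 1))
    (hdi : 0 ≤ d i) :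
    ∫⁻ y in {y : Fin (m + 1) → ℝ | ∀ j, y i ≤ y j}, ENNReal.ofReal (y i)
        ∂Measure.pi (fun j : Fin (m + 1) => (expMeasure (h j)).map (· + d j)) =
      ENNReal.ofReal (h i * ∫ t in Ioi (d i), t * shiftedSurvival h d (m + 1) t) := by
  have := fun j : Fin (m + 1) => isProbabilityMeasure_map_add_expMeasure (hh j j.isLt) (d j)
  have hdensity : EqOn
      (fun t => ENNReal.ofReal (h i * exp (-(h i * (t - d i)))) * (ENNReal.ofReal t *
        ∏ j : Fin m, ENNReal.ofReal (exp (-(h (i.succAbove j) * max (t - d (i.succAbove j)) 0)))))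
      (fun t => ENNReal.ofReal (h i * (t * shiftedSurvival h d (m + 1) t))) (Ici (d i)) :=
    fun t ht => by
    dsimp only
    have ht0 : 0 ≤ t := hdi.trans ht
    rw [shiftedSurvival, ← Fin.prod_univ_eq_prod_range (fun j => exp (-(h j * max (t - d j) 0))),
      Fin.prod_univ_succAbove _ i, max_eq_left (sub_nonneg.2 ht),
      ← ENNReal.ofReal_prod_of_nonneg fun _ _ => (exp_pos _).le,
      ← ENNReal.ofReal_mul ht0, ← ENNReal.ofReal_mul (by positivity [hh i i.isLt])]
    congr 1
    ring
  have hint : IntegrableOn (fun t => h i * (t * shiftedSurvival h d (m + 1) t)) (Ici (d i)) :=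
    (integrableOn_Ici_iff_integrableOn_Ioi).2
      ((integrableOn_Ioi_mul_shiftedSurvival m.succ_pos hh hdi).const_mul _)
  have hnonneg : 0 ≤ᵐ[volume.restrict (Ici (d i))]
      fun t => h i * (t * shiftedSurvival h d (m + 1) t) :=
    ae_restrict_of_forall_mem measurableSet_Ici fun t ht =>
      mul_nonneg (hh i i.isLt).le (mul_nonneg (hdi.trans ht) (shiftedSurvival_pos t).le)
  simp_rw [setLIntegral_pi_eval_forall_le _ i ENNReal.measurable_ofReal,
    map_add_expMeasure_Ici (hh _ (Fin.isLt _))]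
  rw [lintegral_map_add_expMeasure (d i) (by fun_prop),
    setLIntegral_congr_fun measurableSet_Ici hdensity,
    ← ofReal_integral_eq_lintegral_ofReal hint hnonneg, integral_Ici_eq_integral_Ioi,
    integral_const_mul]

theorem setIntegral_pi_eval_forall_le_expMeasure (hh : ∀ j < m + 1, 0 < h j) (i : Fin (m + 1))
    (hdi : 0 ≤ d i) :
    ∫ y in {y : Fin (m + 1) → ℝ | ∀ j, y i ≤ y j}, y i
        ∂Measure.pi (fun j : Fin (m + 1) => (expMeasure (h j)).map (· + d j)) =
      h i * ∫ t in Ioi (d i), t * shiftedSurvival h d (m + 1) t := by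
  have := fun j : Fin (m + 1) => isProbabilityMeasure_map_add_expMeasure (hh j j.isLt) (d j)
  have hsupport : ∀ᵐ t ∂(expMeasure (h i)).map (· + d i), d i ≤ t := by
    change Ici (d i) ∈ ae _
    rw [mem_ae_iff, prob_compl_eq_one_sub measurableSet_Ici,
      map_add_expMeasure_Ici (hh i i.isLt), sub_self, max_self, mul_zero, neg_zero, exp_zero,
      ENNReal.ofReal_one, tsub_self]
  have hnonneg : ∀ᵐ y ∂Measure.pi (fun j : Fin (m + 1) => (expMeasure (h j)).map (· + d j)),
      0 ≤ y i :=
    ((Measure.tendsto_eval_ae_ae (i := i)).eventually hsupport).mono fun y hy => hdi.trans hy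
  rw [integral_eq_lintegral_of_nonneg_ae (ae_restrict_of_ae hnonneg)
      (measurable_pi_apply i).aestronglyMeasurable,
    setLIntegral_pi_eval_forall_le_expMeasure hh i hdi, ENNReal.toReal_ofReal]
  exact mul_nonneg (hh i i.isLt).le (setIntegral_nonneg measurableSet_Ioi fun t ht =>
    mul_nonneg (hdi.trans ht.out.le) (shiftedSurvival_pos t).le)

end Winner

theorem expectation_winner_contribution_shifted_exponentials_general
    {Ω : Type*} [MeasurableSpace Ω] (μ : Measure Ω)
    (n : ℕ) (hn : 0 < n) (h d : ℕ → ℝ)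
    (hh : ∀ i < n, 0 < h i)
    (hd0 : 0 ≤ d 0) (hdmono : ∀ i, i + 1 < n → d i ≤ d (i + 1))
    (X : ℕ → Ω → ℝ) (hXm : ∀ i, Measurable (X i))
    (hindep : iIndepFun (fun i : Fin n => X i) μ)
    (hlaw : ∀ i < n, μ.map (X i) = expMeasure (h i))
    (i : Fin n) :
    ∫ ω in {ω | ∀ j : Fin n, X i ω + d i ≤ X j ω + d j}, (X i ω + d i) ∂μ =
      h i *
        ((∑ k ∈ Finset.Ico (i : ℕ) (n - 1),
          (Real.exp (∑ j ∈ Finset.range (k + 1), h j * d j) / (Hsum h k) ^ 2) *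
            ((1 + Hsum h k * d k) * Real.exp (-(Hsum h k * d k)) -
              (1 + Hsum h k * d (k + 1)) * Real.exp (-(Hsum h k * d (k + 1)))))
        + (Real.exp (∑ j ∈ Finset.range n, h j * d j) / (Hsum h (n - 1)) ^ 2) *
            ((1 + Hsum h (n - 1) * d (n - 1)) *
              Real.exp (-(Hsum h (n - 1) * d (n - 1))))) := by
  obtain ⟨m, rfl⟩ := Nat.exists_eq_add_one_of_ne_zero hn.ne'
  have hd : MonotoneOn d (Iio (m + 1)) :=
    monotoneOn_of_le_add_one ordConnected_Iio fun k _ _ hk => hdmono k hk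
  have hdi : 0 ≤ d i := hd0.trans (hd m.succ_pos i.isLt (Nat.zero_le _))
  have hS : MeasurableSet {y : Fin (m + 1) → ℝ | ∀ j, y i ≤ y j} := by
    simp only [ofPred_forall]
    exact MeasurableSet.iInter fun j =>
      measurableSet_le (measurable_pi_apply i) (measurable_pi_apply j)
  have hZ : μ.map (fun ω (j : Fin (m + 1)) => X j ω + d j) =
      Measure.pi fun j : Fin (m + 1) => (expMeasure (h j)).map (· + d j) := by
    rw [hindep.map_fun_add_const_eq_pi (fun j : Fin (m + 1) => hXm j) fun j => d j]
    congr with j : 1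
    rw [hlaw j j.isLt]
  rw [← integral_Ioi_mul_shiftedSurvival hh hd hd0 i.isLt,
    ← setIntegral_pi_eval_forall_le_expMeasure hh i hdi, ← hZ,
    setIntegral_map hS (measurable_pi_apply i).aestronglyMeasurable
      (measurable_pi_lambda (fun ω (j : Fin (m + 1)) => X j ω + d j)
        fun j => (hXm j).add_const _).aemeasurable]
  rfl

/-- **Contribution `τ̄_i` of miner `i` to the expected inter-block time (proof of Theorem 1).**
If `X 0, …, X (n-1)` are independent exponential random variables with rates
`h 0, …, h (n-1) > 0` and `0 ≤ d 0 ≤ d 1 ≤ ⋯ ≤ d (n-1)` are shifts, then for each `i`,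
`E[(X i + d i) · 1{X i + d i ≤ X j + d j for all j}]` equals the closed-form expression
`τ̄_i` of the paper. -/
theorem expectation_winner_contribution_shifted_exponentials
    {Ω : Type*} [MeasurableSpace Ω] (μ : Measure Ω) [IsProbabilityMeasure μ]
    (n : ℕ) (hn : 0 < n) (h d : ℕ → ℝ)
    (hh : ∀ i < n, 0 < h i)
    (hd0 : 0 ≤ d 0) (hdmono : ∀ i, i + 1 < n → d i ≤ d (i + 1))
    (X : ℕ → Ω → ℝ) (hXm : ∀ i, Measurable (X i))
    (hindep : iIndepFun (fun i : Fin n => X i) μ)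
    (hlaw : ∀ i < n, μ.map (X i) = expMeasure (h i))
    (i : Fin n) :
    ∫ ω in {ω | ∀ j : Fin n, X i ω + d i ≤ X j ω + d j}, (X i ω + d i) ∂μ =
      h i *
        ((∑ k ∈ Finset.Ico (i : ℕ) (n - 1),
          (Real.exp (∑ j ∈ Finset.range (k + 1), h j * d j) / (Hsum h k) ^ 2) *
            ((1 + Hsum h k * d k) * Real.exp (-(Hsum h k * d k)) -
              (1 + Hsum h k * d (k + 1)) * Real.exp (-(Hsum h k * d (k + 1)))))
        + (Real.exp (∑ j ∈ Finset.range n, h j * d j) / (Hsum h (n - 1)) ^ 2) *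
            ((1 + Hsum h (n - 1) * d (n - 1)) *
              Real.exp (-(Hsum h (n - 1) * d (n - 1))))) :=
  expectation_winner_contribution_shifted_exponentials_general μ n hn h d hh hd0 hdmono X hXm hindep
    hlaw i
end

section
/- Let X_1 and X_2 be independent exponential random variables with rates h_1 > 0 and h_2 > 0 respectively, and let 0 ≤ d_1 ≤ d_2 be shifts. Then E[ min(X_1 + d_1, X_2 + d_2) ] = d_1 + (1/h_1)·(1 − e^{-h_1 (d_2 − d_1)}) + (1/(h_1 + h_2))·e^{-h_1 (d_2 − d_1)}. (This is the expected inter-block time τ̄ in the two-miner coordinated blockchain model, Corollary 1 of the paper.) -/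
open MeasureTheory ProbabilityTheory Real Set

/-!
Subtracting `d₁`, it suffices to compute `E[Z]` for `Z = min X₁ (X₂ + c)`, `c = d₂ - d₁ ≥ 0`.
By independence `P(Z > t) = P(X₁ > t) P(X₂ > t - c)`, which is `e^{-h₁ t}` on `[0, c]` and
`e^{h₂ c} e^{-(h₁ + h₂) t}` on `[c, ∞)`; integrating this survival function over `(0, ∞)`
(the layer-cake formula) gives the two non-constant terms.
-/

lemma expMeasure_real_Ioi {r : ℝ} (hr : 0 < r) (s : ℝ) :
    (expMeasure r).real (Ioi s) = exp (-(r * max s 0)) := by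
  have := isProbabilityMeasure_expMeasure hr
  rw [← compl_Iic, measureReal_compl measurableSet_Iic, probReal_univ, ← cdf_eq_real,
    cdf_expMeasure_eq hr]
  rcases le_or_gt 0 s with hs | hs
  · simp [hs]
  · simp [hs.not_ge, hs.le]

lemma ae_nonneg_expMeasure {r : ℝ} (hr : 0 < r) : ∀ᵐ x ∂expMeasure r, 0 ≤ x := by
  have := isProbabilityMeasure_expMeasure hr
  have hIic : (expMeasure r).real (Iic 0) = 0 := by
    simp [← cdf_eq_real, cdf_expMeasure_eq hr]
  rw [measureReal_eq_zero_iff] at hIic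
  exact measure_mono_null (fun x (hx : ¬ 0 ≤ x) => (not_le.1 hx).le) hIic

section

variable {Ω : Type*} [MeasurableSpace Ω] {μ : Measure Ω} {X : Ω → ℝ} {r : ℝ}

lemma measureReal_lt_of_map_eq_expMeasure (hr : 0 < r) (hX : Measurable X)
    (hlaw : μ.map X = expMeasure r) (s : ℝ) :
    μ.real {ω | s < X ω} = exp (-(r * max s 0)) := by
  rw [← expMeasure_real_Ioi hr, ← hlaw, map_measureReal_apply hX measurableSet_Ioi]
  rfl

lemma ae_nonneg_of_map_eq_expMeasure (hr : 0 < r) (hX : Measurable X)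
    (hlaw : μ.map X = expMeasure r) : 0 ≤ᵐ[μ] X :=
  show ∀ᵐ ω ∂μ, 0 ≤ X ω from ae_of_ae_map hX.aemeasurable (hlaw ▸ ae_nonneg_expMeasure hr)

end

lemma ProbabilityTheory.IndepFun.measureReal_lt_min {Ω β : Type*} [MeasurableSpace Ω]
    {μ : Measure Ω} [LinearOrder β] [TopologicalSpace β] [OrderClosedTopology β]
    [MeasurableSpace β] [OpensMeasurableSpace β] {X Y : Ω → β} (hXY : IndepFun X Y μ) (t : β) :
    μ.real {ω | t < min (X ω) (Y ω)} = μ.real {ω | t < X ω} * μ.real {ω | t < Y ω} := by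
  have hset : {ω | t < min (X ω) (Y ω)} = X ⁻¹' Ioi t ∩ Y ⁻¹' Ioi t := by ext; simp
  simp only [measureReal_def, hset,
    hXY.measure_inter_preimage_eq_mul _ _ measurableSet_Ioi measurableSet_Ioi, ENNReal.toReal_mul]
  rfl

lemma integrable_of_integrableOn_measureReal_lt {Ω : Type*} [MeasurableSpace Ω]
    {μ : Measure Ω} [IsFiniteMeasure μ] {f : Ω → ℝ} (hf_nn : 0 ≤ᵐ[μ] f)
    (hf : AEStronglyMeasurable f μ)
    (htail : IntegrableOn (fun t => μ.real {ω | t < f ω}) (Ioi 0)) : Integrable f μ := by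
  refine ⟨hf, (hasFiniteIntegral_iff_ofReal hf_nn).2 ?_⟩
  rw [lintegral_eq_lintegral_meas_lt μ hf_nn hf.aemeasurable]
  simpa only [measureReal_def, ENNReal.ofReal_toReal (measure_ne_top _ _)] using
    htail.lintegral_lt_top

/-- The survival function `t ↦ P(min X₁ (X₂ + c) > t)` for independent `X₁ ~ Exp(h₁)`,
`X₂ ~ Exp(h₂)`. -/
noncomputable def minShiftedExpSurvival (h₁ h₂ c t : ℝ) : ℝ :=
  exp (-(h₁ * max t 0)) * exp (-(h₂ * max (t - c) 0))

namespace minShiftedExpSurvival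

variable {h₁ h₂ c t : ℝ}

lemma eq_of_le (ht : 0 ≤ t) (htc : t ≤ c) : minShiftedExpSurvival h₁ h₂ c t = exp (-h₁ * t) := by
  simp [minShiftedExpSurvival, ht, htc]

lemma eq_of_ge (hc : 0 ≤ c) (hct : c ≤ t) :
    minShiftedExpSurvival h₁ h₂ c t = exp (h₂ * c) * exp (-(h₁ + h₂) * t) := by
  simp only [minShiftedExpSurvival, max_eq_left (hc.trans hct), max_eq_left (sub_nonneg.2 hct),
    ← exp_add]
  ring_nf

lemma continuous : Continuous (minShiftedExpSurvival h₁ h₂ c) := by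
  unfold minShiftedExpSurvival
  fun_prop

lemma integrableOn_Ioi (hk : 0 < h₁ + h₂) (hc : 0 ≤ c) :
    IntegrableOn (minShiftedExpSurvival h₁ h₂ c) (Ioi 0) := by
  rw [← Ioc_union_Ioi_eq_Ioi hc]
  refine continuous.integrableOn_Ioc.union ?_
  exact IntegrableOn.congr_fun ((integrableOn_exp_mul_Ioi (neg_neg_of_pos hk) c).const_mul _)
    (fun t ht => (eq_of_ge hc (le_of_lt ht)).symm) measurableSet_Ioi

lemma integral_Ioi (hh₁ : h₁ ≠ 0) (hk : 0 < h₁ + h₂) (hc : 0 ≤ c) :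
    ∫ t in Ioi 0, minShiftedExpSurvival h₁ h₂ c t =
      (1 / h₁) * (1 - exp (-(h₁ * c))) + (1 / (h₁ + h₂)) * exp (-(h₁ * c)) := by
  have hhead :
      ∫ t in Ioc 0 c, minShiftedExpSurvival h₁ h₂ c t = (1 / h₁) * (1 - exp (-(h₁ * c))) := by
    rw [setIntegral_congr_fun measurableSet_Ioc (fun t ht => eq_of_le ht.1.le ht.2),
      ← intervalIntegral.integral_of_le hc,
      intervalIntegral.integral_comp_mul_left (fun t => exp t) (neg_ne_zero.2 hh₁), integral_exp]
    simp only [mul_zero, exp_zero, smul_eq_mul]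
    field_simp
    ring
  have htail :
      ∫ t in Ioi c, minShiftedExpSurvival h₁ h₂ c t = (1 / (h₁ + h₂)) * exp (-(h₁ * c)) := by
    rw [setIntegral_congr_fun measurableSet_Ioi (fun t ht => eq_of_ge hc (le_of_lt ht)),
      integral_const_mul, integral_exp_mul_Ioi (neg_neg_of_pos hk) c]
    field_simp
    rw [← exp_add]
    ring_nf
  rw [← Ioc_union_Ioi_eq_Ioi hc, setIntegral_union Ioc_disjoint_Ioi_same measurableSet_Ioi
    continuous.integrableOn_Ioc ((integrableOn_Ioi hk hc).mono_set (Ioi_subset_Ioi hc)),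
    hhead, htail]

end minShiftedExpSurvival

lemma measureReal_lt_min_add_eq_minShiftedExpSurvival {Ω : Type*} [MeasurableSpace Ω]
    {μ : Measure Ω} {X₁ X₂ : Ω → ℝ} {h₁ h₂ : ℝ} (hh₁ : 0 < h₁) (hh₂ : 0 < h₂) (hX₁ : Measurable X₁)
    (hX₂ : Measurable X₂) (hindep : IndepFun X₁ X₂ μ) (hlaw₁ : μ.map X₁ = expMeasure h₁)
    (hlaw₂ : μ.map X₂ = expMeasure h₂) (c t : ℝ) :
    μ.real {ω | t < min (X₁ ω) (X₂ ω + c)} = minShiftedExpSurvival h₁ h₂ c t := by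
  have hX₂c : {ω | t < X₂ ω + c} = {ω | t - c < X₂ ω} := by simp only [sub_lt_iff_lt_add]
  have hmin : μ.real {ω | t < min (X₁ ω) (X₂ ω + c)} =
      μ.real {ω | t < X₁ ω} * μ.real {ω | t < X₂ ω + c} :=
    (hindep.comp measurable_id (measurable_add_const c)).measureReal_lt_min t
  rw [hmin, hX₂c, measureReal_lt_of_map_eq_expMeasure hh₁ hX₁ hlaw₁,
    measureReal_lt_of_map_eq_expMeasure hh₂ hX₂ hlaw₂, minShiftedExpSurvival]

theorem expectation_min_two_shifted_exponentials_general
    {Ω : Type*} [MeasurableSpace Ω] (μ : Measure Ω) [IsProbabilityMeasure μ]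
    (h₁ h₂ : ℝ) (hh₁ : 0 < h₁) (hh₂ : 0 < h₂)
    (d₁ d₂ : ℝ) (hd₁₂ : d₁ ≤ d₂)
    (X₁ X₂ : Ω → ℝ) (hX₁ : Measurable X₁) (hX₂ : Measurable X₂)
    (hindep : IndepFun X₁ X₂ μ)
    (hlaw₁ : μ.map X₁ = expMeasure h₁) (hlaw₂ : μ.map X₂ = expMeasure h₂) :
    ∫ ω, min (X₁ ω + d₁) (X₂ ω + d₂) ∂μ =
      d₁ + (1 / h₁) * (1 - Real.exp (-(h₁ * (d₂ - d₁))))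
        + (1 / (h₁ + h₂)) * Real.exp (-(h₁ * (d₂ - d₁))) := by
  set c := d₂ - d₁
  have hc : 0 ≤ c := sub_nonneg.2 hd₁₂
  have hk : 0 < h₁ + h₂ := add_pos hh₁ hh₂
  set Z : Ω → ℝ := fun ω => min (X₁ ω) (X₂ ω + c)
  have hshift : ∀ ω, min (X₁ ω + d₁) (X₂ ω + d₂) = Z ω + d₁ := fun ω => by
    rw [← min_add_add_right]
    simp only [c, sub_add_cancel, add_assoc]
  have hsurv : ∀ t, μ.real {ω | t < Z ω} = minShiftedExpSurvival h₁ h₂ c t :=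
    measureReal_lt_min_add_eq_minShiftedExpSurvival hh₁ hh₂ hX₁ hX₂ hindep hlaw₁ hlaw₂ c
  have hZ_nn : 0 ≤ᵐ[μ] Z := by
    filter_upwards [ae_nonneg_of_map_eq_expMeasure hh₁ hX₁ hlaw₁,
      ae_nonneg_of_map_eq_expMeasure hh₂ hX₂ hlaw₂] with ω h₁ω h₂ω
    exact le_min h₁ω (add_nonneg h₂ω hc)
  have hZ_int : Integrable Z μ := by
    refine integrable_of_integrableOn_measureReal_lt hZ_nn (by fun_prop) ?_
    simpa only [hsurv] using minShiftedExpSurvival.integrableOn_Ioi hk hc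
  calc ∫ ω, min (X₁ ω + d₁) (X₂ ω + d₂) ∂μ = ∫ ω, Z ω ∂μ + d₁ := by
        simp_rw [hshift]
        rw [integral_add hZ_int (integrable_const d₁), integral_const, probReal_univ, one_smul]
    _ = (∫ t in Ioi 0, minShiftedExpSurvival h₁ h₂ c t) + d₁ := by
        simp_rw [hZ_int.integral_eq_integral_meas_lt hZ_nn, hsurv]
    _ = _ := by
        rw [minShiftedExpSurvival.integral_Ioi hh₁.ne' hk hc]
        ring

/-- **Expected inter-block time in the two-miner coordinated setting (Corollary 1).**
If `X₁, X₂` are independent exponential random variables with rates `h₁, h₂ > 0`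
and `0 ≤ d₁ ≤ d₂` are shifts, then
`E[min (X₁ + d₁) (X₂ + d₂)] = d₁ + (1/h₁)(1 − e^{-h₁(d₂−d₁)}) + (1/(h₁+h₂)) e^{-h₁(d₂−d₁)}`. -/
theorem expectation_min_two_shifted_exponentials
    {Ω : Type*} [MeasurableSpace Ω] (μ : Measure Ω) [IsProbabilityMeasure μ]
    (h₁ h₂ : ℝ) (hh₁ : 0 < h₁) (hh₂ : 0 < h₂)
    (d₁ d₂ : ℝ) (hd₁ : 0 ≤ d₁) (hd₁₂ : d₁ ≤ d₂)
    (X₁ X₂ : Ω → ℝ) (hX₁ : Measurable X₁) (hX₂ : Measurable X₂)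
    (hindep : IndepFun X₁ X₂ μ)
    (hlaw₁ : μ.map X₁ = expMeasure h₁) (hlaw₂ : μ.map X₂ = expMeasure h₂) :
    ∫ ω, min (X₁ ω + d₁) (X₂ ω + d₂) ∂μ =
      d₁ + (1 / h₁) * (1 - Real.exp (-(h₁ * (d₂ - d₁))))
        + (1 / (h₁ + h₂)) * Real.exp (-(h₁ * (d₂ - d₁))) :=
  expectation_min_two_shifted_exponentials_general μ h₁ h₂ hh₁ hh₂ d₁ d₂ hd₁₂ X₁ X₂ hX₁ hX₂ hindep
    hlaw₁ hlaw₂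
end

section
/- A miner strictly closer to the coordinator has strictly higher individual efficiency, irrespective of the compute-capacity distribution. Precisely: let X_1,…,X_n be independent exponential random variables with rates h_1,…,h_n > 0 and shifts d_1,…,d_n ≥ 0, and suppose d_i < d_j for two indices i ≠ j. Then P( X_i + d_i ≤ X_k + d_k for all k ) / h_i > P( X_j + d_j ≤ X_k + d_k for all k ) / h_j; that is, p_i/h_i > p_j/h_j, hence η_i^C > η_j^C. -/
/-! Write `τ = min_k (X k + d k)` for the block time. Miner `a` wins iff `X a ≤ Y`, where
`Y = min_{k ≠ a} (X k + d k) - d a` is independent of `X a`. Since the exponential density is `r`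
times the exponential tail, `P(X a < Y) = ∫ r e^{-rt} P(Y > t) dt = r E[min(X a, Y)⁺]`, and
`min(X a, Y) = τ - d a`; ties have probability zero. Hence `p_a / h_a = E[(τ - d_a)⁺]` with the same
`τ` for every miner, which is strictly decreasing in `d_a` because `τ` exceeds every level with
positive probability. -/

open MeasureTheory ProbabilityTheory Real Set
open scoped ENNReal

lemma ciInf_eq_min_ciInf_ne {ι α : Type*} [Finite ι] [Nontrivial ι]
    [ConditionallyCompleteLinearOrder α] (f : ι → α) (a : ι) :
    ⨅ i, f i = min (f a) (⨅ i : {i // i ≠ a}, f i) := by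
  have : Nonempty {i // i ≠ a} := nonempty_subtype.mpr (exists_ne a)
  have hbdd := (finite_range f).bddBelow
  refine le_antisymm (le_min (ciInf_le hbdd a) (le_ciInf fun i => ciInf_le hbdd i)) ?_
  refine le_ciInf fun i => ?_
  by_cases hi : i = a
  · exact hi ▸ min_le_left _ _
  · exact (min_le_right _ _).trans
      (ciInf_le (finite_range fun i : {i // i ≠ a} => f i).bddBelow ⟨i, hi⟩)

namespace ProbabilityTheory

instance nullSingletonClass_expMeasure (r : ℝ) : NullSingletonClass (expMeasure r) :=
  nullSingletonClass_withDensity _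

lemma expMeasure_Ioi {r x : ℝ} (hr : 0 < r) (hx : 0 ≤ x) :
    expMeasure r (Ioi x) = ENNReal.ofReal (exp (-(r * x))) := by
  have := isProbabilityMeasure_expMeasure hr
  have hexp : exp (-(r * x)) ≤ 1 := exp_le_one_iff.mpr (by nlinarith)
  rw [← compl_Iic, prob_compl_eq_one_sub measurableSet_Iic, ← ofReal_cdf, cdf_expMeasure_eq hr,
    if_pos hx, ← ENNReal.ofReal_one, ← ENNReal.ofReal_sub _ (by linarith), sub_sub_cancel]

lemma measurable_exponentialPDF (r : ℝ) : Measurable (exponentialPDF r) :=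
  (measurable_exponentialPDFReal r).ennreal_ofReal

lemma lintegral_expMeasure {r : ℝ} {f : ℝ → ℝ≥0∞} (hf : Measurable f) :
    ∫⁻ x, f x ∂expMeasure r = ∫⁻ x in Ioi 0, ENNReal.ofReal (r * exp (-(r * x))) * f x := by
  have hsupp : (exponentialPDF r * f).support ⊆ Ici 0 := fun x hx => by
    by_contra hneg
    exact hx (by simp [exponentialPDF_of_neg (not_le.mp hneg)])
  rw [show expMeasure r = volume.withDensity (exponentialPDF r) from rfl,
    lintegral_withDensity_eq_lintegral_mul _ (measurable_exponentialPDF r) hf,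
    ← setLIntegral_eq_of_support_subset hsupp, setLIntegral_congr Ioi_ae_eq_Ici.symm]
  exact setLIntegral_congr_fun measurableSet_Ioi fun x hx => by
    rw [Pi.mul_apply, ← exponentialPDF_of_nonneg hx.le]

end ProbabilityTheory

namespace MeasureTheory

variable {Ω : Type*} [MeasurableSpace Ω] {μ : Measure Ω}

lemma lintegral_ofReal_eq_lintegral_meas_lt {f : Ω → ℝ} (hf : AEMeasurable f μ) :
    ∫⁻ ω, ENNReal.ofReal (f ω) ∂μ = ∫⁻ t in Ioi 0, μ {ω | t < f ω} := by
  have hmax : ∀ ω, ENNReal.ofReal (f ω) = ENNReal.ofReal (max (f ω) 0) := fun ω => by simp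
  simp_rw [hmax]
  rw [lintegral_eq_lintegral_meas_lt μ (f := fun ω => max (f ω) 0)
    (ae_of_all _ fun ω => le_max_right _ _) (hf.max aemeasurable_const)]
  refine setLIntegral_congr_fun measurableSet_Ioi fun t (ht : 0 < t) => ?_
  simp only [lt_max_iff, not_lt_of_gt ht, or_false]

lemma lintegral_ofReal_sub_lt_lintegral_ofReal_sub {f : Ω → ℝ} (hf : Measurable f)
    {c c' : ℝ} (hc : c < c') (hfin : ∫⁻ ω, ENNReal.ofReal (f ω - c) ∂μ ≠ ∞)
    (hpos : μ {ω | c' < f ω} ≠ 0) :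
    ∫⁻ ω, ENNReal.ofReal (f ω - c') ∂μ < ∫⁻ ω, ENNReal.ofReal (f ω - c) ∂μ := by
  have hle : ∀ ω, ENNReal.ofReal (f ω - c') ≤ ENNReal.ofReal (f ω - c) := fun ω =>
    ENNReal.ofReal_le_ofReal (by linarith)
  refine lintegral_strict_mono_of_ae_le_of_ae_lt_on (hf.sub_const c).ennreal_ofReal.aemeasurable
    (ne_top_of_le_ne_top hfin (lintegral_mono hle)) (ae_of_all _ hle) hpos
    (ae_of_all _ fun ω (hω : c' < f ω) => ?_)
  exact (ENNReal.ofReal_lt_ofReal_iff (by linarith)).mpr (by linarith)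

end MeasureTheory

namespace ProbabilityTheory

variable {Ω : Type*} [MeasurableSpace Ω] {μ : Measure Ω}

lemma iIndepFun.indepFun_subtype_ne {ι β : Type*} [Finite ι] [DecidableEq ι]
    [MeasurableSpace β] {f : ι → Ω → β} (hf : iIndepFun f μ) (hm : ∀ i, Measurable (f i)) (a : ι) :
    f a ⟂ᵢ[μ] fun ω (i : {i // i ≠ a}) => f i ω := by
  have := Fintype.ofFinite ι
  have hdisj : Disjoint ({a} : Finset ι) (Finset.univ.erase a) := by simp
  exact (hf.indepFun_finset _ _ hdisj hm).comp
    (measurable_pi_apply (⟨a, Finset.mem_singleton_self a⟩ : ({a} : Finset ι)))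
    (measurable_pi_lambda _ fun i : {i // i ≠ a} =>
      measurable_pi_apply (⟨i.1, Finset.mem_erase.mpr ⟨i.2, Finset.mem_univ _⟩⟩ :
        (Finset.univ.erase a : Finset ι)))

variable [IsFiniteMeasure μ]

lemma IndepFun.measure_setOf_eq_eq_zero {β : Type*} [MeasurableSpace β] [MeasurableEq β]
    {X Y : Ω → β} (hX : Measurable X) (hY : Measurable Y) (hXY : X ⟂ᵢ[μ] Y)
    [NullSingletonClass (μ.map X)] :
    μ {ω | X ω = Y ω} = 0 := by
  have hlaw := (indepFun_iff_map_prod_eq_prod_map_map hX.aemeasurable hY.aemeasurable).mp hXY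
  have hpair : μ {ω | X ω = Y ω} = μ.map (fun ω => (X ω, Y ω)) (diagonal β) := by
    rw [Measure.map_apply (hX.prodMk hY) measurableSet_diagonal]; rfl
  rw [hpair, hlaw, Measure.prod_apply_symm measurableSet_diagonal]
  simp [preimage, diagonal]

lemma IndepFun.measure_setOf_le_eq_measure_setOf_lt {β : Type*} [MeasurableSpace β]
    [MeasurableEq β] [PartialOrder β] {X Y : Ω → β} (hX : Measurable X) (hY : Measurable Y)
    (hXY : X ⟂ᵢ[μ] Y) [NullSingletonClass (μ.map X)] :
    μ {ω | X ω ≤ Y ω} = μ {ω | X ω < Y ω} := by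
  refine le_antisymm ?_ (measure_mono fun ω (h : X ω < Y ω) => (h.le : X ω ≤ Y ω))
  calc μ {ω | X ω ≤ Y ω} = μ ({ω | X ω < Y ω} ∪ {ω | X ω = Y ω}) := by
        congr 1; ext ω; exact le_iff_lt_or_eq (a := X ω)
    _ ≤ μ {ω | X ω < Y ω} + μ {ω | X ω = Y ω} := measure_union_le _ _
    _ = μ {ω | X ω < Y ω} := by rw [hXY.measure_setOf_eq_eq_zero hX hY, add_zero]

lemma IndepFun.measure_setOf_lt_eq_ofReal_mul_lintegral_min {r : ℝ} (hr : 0 < r) {X Y : Ω → ℝ}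
    (hX : Measurable X) (hY : Measurable Y) (hXY : X ⟂ᵢ[μ] Y) (hlaw : μ.map X = expMeasure r) :
    μ {ω | X ω < Y ω} = ENNReal.ofReal r * ∫⁻ ω, ENNReal.ofReal (min (X ω) (Y ω)) ∂μ := by
  set ν := μ.map Y
  have hν : Measurable fun x => ν (Ioi x) :=
    Antitone.measurable fun x y hxy => measure_mono (Ioi_subset_Ioi hxy)
  have hlt : MeasurableSet {p : ℝ × ℝ | p.1 < p.2} := measurableSet_lt measurable_fst measurable_snd
  have hpair :
      μ {ω | X ω < Y ω} = ∫⁻ x in Ioi 0, ENNReal.ofReal (r * exp (-(r * x))) * ν (Ioi x) := by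
    rw [← lintegral_expMeasure hν, ← hlaw]
    calc μ {ω | X ω < Y ω} = μ.map (fun ω => (X ω, Y ω)) {p | p.1 < p.2} :=
          (Measure.map_apply (hX.prodMk hY) hlt).symm
      _ = ∫⁻ x, ν (Ioi x) ∂μ.map X := by
          rw [(indepFun_iff_map_prod_eq_prod_map_map hX.aemeasurable hY.aemeasurable).mp hXY,
            Measure.prod_apply hlt]
          rfl
  have htail : ∀ t ∈ Ioi (0 : ℝ), μ {ω | t < min (X ω) (Y ω)} =
      ENNReal.ofReal (exp (-(r * t))) * ν (Ioi t) := fun t ht => by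
    rw [show {ω | t < min (X ω) (Y ω)} = X ⁻¹' Ioi t ∩ Y ⁻¹' Ioi t by ext; simp,
      hXY.measure_inter_preimage_eq_mul _ _ measurableSet_Ioi measurableSet_Ioi,
      ← Measure.map_apply hX measurableSet_Ioi, hlaw, expMeasure_Ioi hr ht.le,
      Measure.map_apply hY measurableSet_Ioi]
  rw [hpair, lintegral_ofReal_eq_lintegral_meas_lt (hX.min hY).aemeasurable,
    setLIntegral_congr_fun measurableSet_Ioi htail,
    ← lintegral_const_mul' _ _ ENNReal.ofReal_ne_top]
  simp_rw [← mul_assoc, ← ENNReal.ofReal_mul hr.le]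

end ProbabilityTheory

section Race

variable {ι Ω : Type*} [Finite ι] [MeasurableSpace Ω] {μ : Measure Ω} {d : ι → ℝ}
  {X : ι → Ω → ℝ}

noncomputable def blockTime (d : ι → ℝ) (X : ι → Ω → ℝ) (ω : Ω) : ℝ := ⨅ k, X k ω + d k

lemma measurable_blockTime (hX : ∀ k, Measurable (X k)) : Measurable (blockTime d X) :=
  Measurable.iInf fun k => (hX k).add_const (d k)

theorem measure_wins_eq_ofReal_mul_lintegral [IsFiniteMeasure μ] [Nontrivial ι]
    (hX : ∀ k, Measurable (X k)) (hindep : iIndepFun X μ) {a : ι} {r : ℝ} (hr : 0 < r)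
    (hlaw : μ.map (X a) = expMeasure r) :
    μ {ω | ∀ k, X a ω + d a ≤ X k ω + d k} =
      ENNReal.ofReal r * ∫⁻ ω, ENNReal.ofReal (blockTime d X ω - d a) ∂μ := by
  classical
  have : Nonempty {k // k ≠ a} := nonempty_subtype.mpr (exists_ne a)
  let others : ({k // k ≠ a} → ℝ) → ℝ := fun v => (⨅ k, v k + d k) - d a
  have hothers : Measurable others :=
    (Measurable.iInf fun k => (measurable_pi_apply k).add_const _).sub_const _
  set Y : Ω → ℝ := fun ω => (⨅ k : {k // k ≠ a}, X k ω + d k) - d a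
  have hY : Measurable Y := hothers.comp (measurable_pi_lambda _ fun k => hX k)
  have hXY : X a ⟂ᵢ[μ] Y := (hindep.indepFun_subtype_ne hX a).comp measurable_id hothers
  have hwin : {ω | ∀ k, X a ω + d a ≤ X k ω + d k} = {ω | X a ω ≤ Y ω} := by
    ext ω
    change (∀ k, _) ↔ X a ω ≤ (⨅ k : {k // k ≠ a}, X k ω + d k) - d a
    rw [le_sub_iff_add_le, le_ciInf_iff (Set.finite_range _).bddBelow]
    exact ⟨fun h k => h k, fun h k => if hk : k = a then hk ▸ le_rfl else h ⟨k, hk⟩⟩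
  have hmin : ∀ ω, min (X a ω) (Y ω) = blockTime d X ω - d a := fun ω => by
    rw [blockTime, ciInf_eq_min_ciInf_ne _ a, ← min_sub_sub_right, add_sub_cancel_right]
  have : NullSingletonClass (μ.map (X a)) := hlaw ▸ inferInstance
  rw [hwin, hXY.measure_setOf_le_eq_measure_setOf_lt (hX a) hY,
    hXY.measure_setOf_lt_eq_ofReal_mul_lintegral_min hr (hX a) hY hlaw]
  simp_rw [hmin]

lemma lintegral_ofReal_blockTime_sub_ne_top [IsFiniteMeasure μ] [Nontrivial ι]
    (hX : ∀ k, Measurable (X k)) (hindep : iIndepFun X μ) {a : ι} {r : ℝ} (hr : 0 < r)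
    (hlaw : μ.map (X a) = expMeasure r) :
    ∫⁻ ω, ENNReal.ofReal (blockTime d X ω - d a) ∂μ ≠ ∞ := by
  refine (ENNReal.lt_top_of_mul_ne_top_right ?_ (ENNReal.ofReal_pos.mpr hr).ne').ne
  rw [← measure_wins_eq_ofReal_mul_lintegral hX hindep hr hlaw]
  exact measure_ne_top μ _

lemma toReal_measure_wins_div [IsFiniteMeasure μ] [Nontrivial ι]
    (hX : ∀ k, Measurable (X k)) (hindep : iIndepFun X μ) {a : ι} {r : ℝ} (hr : 0 < r)
    (hlaw : μ.map (X a) = expMeasure r) :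
    (μ {ω | ∀ k, X a ω + d a ≤ X k ω + d k}).toReal / r =
      (∫⁻ ω, ENNReal.ofReal (blockTime d X ω - d a) ∂μ).toReal := by
  rw [measure_wins_eq_ofReal_mul_lintegral hX hindep hr hlaw, ENNReal.toReal_mul,
    ENNReal.toReal_ofReal hr.le, mul_div_cancel_left₀ _ hr.ne']

lemma measure_lt_blockTime_ne_zero [Nonempty ι] (hX : ∀ k, Measurable (X k))
    (hindep : iIndepFun X μ) {h : ι → ℝ} (hh : ∀ k, 0 < h k)
    (hlaw : ∀ k, μ.map (X k) = expMeasure (h k)) (c : ℝ) :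
    μ {ω | c < blockTime d X ω} ≠ 0 := by
  have := Fintype.ofFinite ι
  have hsub : (⋂ k, X k ⁻¹' Ioi |c - d k|) ⊆ {ω | c < blockTime d X ω} := fun ω hω => by
    obtain ⟨k, hk⟩ := exists_eq_ciInf_of_finite (f := fun k => X k ω + d k)
    have hXk : |c - d k| < X k ω := mem_iInter.mp hω k
    change c < ⨅ k, X k ω + d k
    rw [← hk]
    linarith [le_abs_self (c - d k)]
  suffices μ (⋂ k, X k ⁻¹' Ioi |c - d k|) ≠ 0 from fun h0 => this (measure_mono_null hsub h0)
  rw [hindep.meas_iInter fun k => ⟨_, measurableSet_Ioi, rfl⟩, Finset.prod_ne_zero_iff]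
  intro k _
  rw [← Measure.map_apply (hX k) measurableSet_Ioi, hlaw k, expMeasure_Ioi (hh k) (abs_nonneg _)]
  exact (ENNReal.ofReal_pos.mpr (exp_pos _)).ne'

end Race

theorem closer_miner_strictly_higher_efficiency_general
    {Ω : Type*} [MeasurableSpace Ω] (μ : Measure Ω) [IsProbabilityMeasure μ]
    (n : ℕ) (h d : Fin n → ℝ)
    (hh : ∀ k, 0 < h k)
    (X : Fin n → Ω → ℝ) (hXm : ∀ k, Measurable (X k))
    (hindep : iIndepFun X μ)
    (hlaw : ∀ k, μ.map (X k) = expMeasure (h k))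
    (i j : Fin n) (hdij : d i < d j) :
    (μ {ω | ∀ k : Fin n, X i ω + d i ≤ X k ω + d k}).toReal / h i >
      (μ {ω | ∀ k : Fin n, X j ω + d j ≤ X k ω + d k}).toReal / h j := by
  have : Nontrivial (Fin n) := nontrivial_of_ne i j fun hij => hdij.ne (congrArg d hij)
  have hfin := lintegral_ofReal_blockTime_sub_ne_top (d := d) hXm hindep (hh i) (hlaw i)
  rw [gt_iff_lt, toReal_measure_wins_div hXm hindep (hh i) (hlaw i),
    toReal_measure_wins_div hXm hindep (hh j) (hlaw j)]
  exact ENNReal.toReal_strict_mono hfin <| lintegral_ofReal_sub_lt_lintegral_ofReal_sub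
    (measurable_blockTime hXm) hdij hfin (measure_lt_blockTime_ne_zero hXm hindep hh hlaw _)

/-- **A strictly closer miner has strictly higher individual efficiency.**
If `X 0, …, X (n-1)` are independent exponential random variables with rates
`h 0, …, h (n-1) > 0` and nonnegative shifts `d`, and two indices `i ≠ j` satisfy
`d i < d j`, then `p i / h i > p j / h j`, where `p k` is the probability that
`X k + d k ≤ X m + d m` for all `m`; hence `η_i > η_j`, irrespective of the
compute-capacity distribution. -/
theorem closer_miner_strictly_higher_efficiency
    {Ω : Type*} [MeasurableSpace Ω] (μ : Measure Ω) [IsProbabilityMeasure μ]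
    (n : ℕ) (h d : Fin n → ℝ)
    (hh : ∀ k, 0 < h k) (hd : ∀ k, 0 ≤ d k)
    (X : Fin n → Ω → ℝ) (hXm : ∀ k, Measurable (X k))
    (hindep : iIndepFun X μ)
    (hlaw : ∀ k, μ.map (X k) = expMeasure (h k))
    (i j : Fin n) (hij : i ≠ j) (hdij : d i < d j) :
    (μ {ω | ∀ k : Fin n, X i ω + d i ≤ X k ω + d k}).toReal / h i >
      (μ {ω | ∀ k : Fin n, X j ω + d j ≤ X k ω + d k}).toReal / h j :=
  closer_miner_strictly_higher_efficiency_general μ n h d hh X hXm hindep hlaw i j hdij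
end
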